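/- arXiv:1702.04196 — 2 statements merged into one kernel-verified Lean document; each statement's English description precedes it below -/
import Mathlib

section
/- Let H = H₁ ⊗ H₂ be a tensor product of Hilbert spaces, let u ∈ H₁ and v ∈ H₂ be unit vectors, and let γ be a density matrix on H with partial traces γ^{(1,0)} on H₁ and γ^{(0,1)} on H₂. Then max{1 − ⟨u, γ^{(1,0)} u⟩, 1 − ⟨v, γ^{(0,1)} v⟩} ≤ 1 − ⟨u ⊗ v, γ (u ⊗ v)⟩ ≤ (1 − ⟨u, γ^{(1,0)} u⟩) + (1 − ⟨v, γ^{(0,1)} v⟩). -/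
open scoped InnerProductSpace ComplexConjugate
open Filter MeasureTheory

/-- The rank-one operator `|u⟩⟨u| : x ↦ ⟨u, x⟩ u`. -/
noncomputable def rankOne {H : Type} [NormedAddCommGroup H] [InnerProductSpace ℂ H]
    (u : H) : H →L[ℂ] H := (innerSL ℂ u).smulRight u

/-- The absolute value `|T| = √(T*T)` of a bounded operator, via the continuous
functional calculus. -/
noncomputable def absOp {H : Type} [NormedAddCommGroup H] [InnerProductSpace ℂ H]
    [CompleteSpace H] (T : H →L[ℂ] H) : H →L[ℂ] H :=
  CFC.sqrt (ContinuousLinearMap.adjoint T * T)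

/-- The trace of an operator computed along a Hilbert basis. -/
noncomputable def traceAlong {H : Type} [NormedAddCommGroup H] [InnerProductSpace ℂ H]
    {ι : Type} (b : HilbertBasis ι ℂ H) (T : H →L[ℂ] H) : ℂ :=
  ∑' i, ⟪b i, T (b i)⟫_ℂ

/-- The trace norm `Tr |T|` computed along a Hilbert basis. -/
noncomputable def traceNormAlong {H : Type} [NormedAddCommGroup H] [InnerProductSpace ℂ H]
    [CompleteSpace H] {ι : Type} (b : HilbertBasis ι ℂ H) (T : H →L[ℂ] H) : ℝ :=
  (traceAlong b (absOp T)).re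

/-- A density matrix: a positive operator whose trace (along every Hilbert basis)
equals `1`. -/
def IsDensityMatrix {H : Type} [NormedAddCommGroup H] [InnerProductSpace ℂ H]
    [CompleteSpace H] (γ : H →L[ℂ] H) : Prop :=
  γ.IsPositive ∧ ∀ (ι : Type) (b : HilbertBasis ι ℂ H), traceAlong b γ = 1

/-- `t` realizes `H` as the Hilbert tensor product of `H₁` and `H₂`:
it is bilinear, satisfies `⟨x ⊗ y, x' ⊗ y'⟩ = ⟨x, x'⟩⟨y, y'⟩`, and elementary
tensors span a dense subspace. -/
def IsHilbertTensorProduct {H₁ H₂ H : Type}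
    [NormedAddCommGroup H₁] [InnerProductSpace ℂ H₁]
    [NormedAddCommGroup H₂] [InnerProductSpace ℂ H₂]
    [NormedAddCommGroup H] [InnerProductSpace ℂ H]
    (t : H₁ →ₗ[ℂ] H₂ →ₗ[ℂ] H) : Prop :=
  (∀ (x x' : H₁) (y y' : H₂), ⟪t x y, t x' y'⟫_ℂ = ⟪x, x'⟫_ℂ * ⟪y, y'⟫_ℂ) ∧
  (Submodule.span ℂ {z : H | ∃ x y, z = t x y}).topologicalClosure = ⊤

section Helpers
variable {H : Type} [NormedAddCommGroup H] [InnerProductSpace ℂ H]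

private lemma inner_sa_idem (T : H →L[ℂ] H)
    (hsa : ∀ z z' : H, ⟪T z, z'⟫_ℂ = ⟪z, T z'⟫_ℂ)
    (hid : ∀ z : H, T (T z) = T z) (x : H) :
    ⟪x, T x⟫_ℂ = ((‖T x‖ ^ 2 : ℝ) : ℂ) := by
  conv_lhs => rw [← hid x]
  rw [← hsa x (T x), inner_self_eq_norm_sq_to_K]
  norm_cast

private lemma clm_sa_contraction (T : H →L[ℂ] H)
    (hsa : ∀ z z' : H, ⟪T z, z'⟫_ℂ = ⟪z, T z'⟫_ℂ)
    (hid : ∀ z : H, T (T z) = T z) (x : H) : ‖T x‖ ≤ ‖x‖ := by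
  have h1 := inner_sa_idem T hsa hid x
  have h2 : ‖T x‖ ^ 2 ≤ ‖x‖ * ‖T x‖ := by
    calc ‖T x‖ ^ 2 = ‖(⟪x, T x⟫_ℂ)‖ := by
          rw [h1, Complex.norm_real, Real.norm_eq_abs, abs_of_nonneg (sq_nonneg _)]
      _ ≤ ‖x‖ * ‖T x‖ := norm_inner_le_norm x (T x)
  nlinarith [norm_nonneg (T x), norm_nonneg x]

private lemma hasSum_norm_inner_sq {ι : Type} (b : HilbertBasis ι ℂ H) (x : H) :
    HasSum (fun j => ‖⟪x, b j⟫_ℂ‖ ^ 2) (‖x‖ ^ 2) := by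
  have h := b.hasSum_inner_mul_inner x x
  rw [inner_self_eq_norm_sq_to_K] at h
  have h2 : (fun i => ⟪x, b i⟫_ℂ * ⟪b i, x⟫_ℂ)
      = fun i => ((‖⟪x, b i⟫_ℂ‖ ^ 2 : ℝ) : ℂ) := by
    funext i
    have hz : ⟪b i, x⟫_ℂ = (starRingEnd ℂ) ⟪x, b i⟫_ℂ := (inner_conj_symm (b i) x).symm
    rw [hz, Complex.mul_conj, Complex.normSq_eq_norm_sq]
  rw [h2] at h
  refine Complex.hasSum_ofReal.mp ?_
  convert h using 2 <;> norm_cast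

private lemma traceAlong_eq_tsum_sq [CompleteSpace H] {ι : Type}
    (b : HilbertBasis ι ℂ H) (γ R P : H →L[ℂ] H)
    (hR : ∀ z z' : H, ⟪R z, z'⟫_ℂ = ⟪z, R z'⟫_ℂ)
    (hRR : ∀ z, R (R z) = γ z)
    (hP : ∀ z z' : H, ⟪P z, z'⟫_ℂ = ⟪z, P z'⟫_ℂ)
    (hPP : ∀ z, P (P z) = P z)
    (hsum : Summable fun i => ‖R (b i)‖ ^ 2) :
    traceAlong b (γ ∘L P) = ((∑' j, ‖P (R (b j))‖ ^ 2 : ℝ) : ℂ) := by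
  have hPle : ∀ x : H, ‖P x‖ ≤ ‖x‖ := clm_sa_contraction P hP hPP
  have hPsum : Summable fun j => ‖P (R (b j))‖ ^ 2 :=
    hsum.of_nonneg_of_le (fun j => sq_nonneg _)
      (fun j => pow_le_pow_left₀ (norm_nonneg _) (hPle _) 2)
  set f : ι → ι → ℂ := fun i j => ⟪R (b i), b j⟫_ℂ * ⟪P (R (b j)), b i⟫_ℂ with hf
  have hgsum : Summable (Function.uncurry f) := by
    apply Summable.of_norm
    have h1 : Summable fun p : ι × ι => ‖⟪R (b p.1), b p.2⟫_ℂ‖ ^ 2 := by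
      rw [summable_prod_of_nonneg (fun p => sq_nonneg _)]
      exact ⟨fun i => (hasSum_norm_inner_sq b (R (b i))).summable,
        hsum.congr fun i => (hasSum_norm_inner_sq b (R (b i))).tsum_eq.symm⟩
    have h0 : Summable fun p : ι × ι => ‖⟪P (R (b p.1)), b p.2⟫_ℂ‖ ^ 2 := by
      rw [summable_prod_of_nonneg (fun p => sq_nonneg _)]
      exact ⟨fun j => (hasSum_norm_inner_sq b (P (R (b j)))).summable,
        hPsum.congr fun j => (hasSum_norm_inner_sq b (P (R (b j)))).tsum_eq.symm⟩
    have h2 : Summable fun p : ι × ι => ‖⟪P (R (b p.2)), b p.1⟫_ℂ‖ ^ 2 := h0.prod_symm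
    apply Summable.of_nonneg_of_le (fun p => norm_nonneg _) (fun p => ?_) (h1.add h2)
    have he : ‖Function.uncurry f p‖
        = ‖⟪R (b p.1), b p.2⟫_ℂ‖ * ‖⟪P (R (b p.2)), b p.1⟫_ℂ‖ := by
      simp [hf, Function.uncurry, norm_mul]
    rw [he]
    nlinarith [sq_nonneg (‖⟪R (b p.1), b p.2⟫_ℂ‖ - ‖⟪P (R (b p.2)), b p.1⟫_ℂ‖),
      sq_nonneg (‖⟪R (b p.1), b p.2⟫_ℂ‖ + ‖⟪P (R (b p.2)), b p.1⟫_ℂ‖)]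
  have key1 : ∀ i, ∑' j, f i j = ⟪b i, (γ ∘L P) (b i)⟫_ℂ := by
    intro i
    have e : ∀ j, f i j = ⟪R (b i), b j⟫_ℂ * ⟪b j, R (P (b i))⟫_ℂ := by
      intro j
      simp only [hf]
      congr 1
      rw [hP, hR]
    rw [tsum_congr e, b.tsum_inner_mul_inner, hR, hRR]
    rfl
  have key2 : ∀ j, ∑' i, f i j = ((‖P (R (b j))‖ ^ 2 : ℝ) : ℂ) := by
    intro j
    have e : ∀ i, f i j
        = (starRingEnd ℂ) (⟪R (b j), b i⟫_ℂ * ⟪b i, P (R (b j))⟫_ℂ) := by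
      intro i
      simp only [hf, map_mul]
      congr 1
      · rw [inner_conj_symm]
        exact hR _ _
      · rw [inner_conj_symm]
    rw [tsum_congr e, ← RCLike.conj_tsum, b.tsum_inner_mul_inner]
    have h3 : ⟪R (b j), P (R (b j))⟫_ℂ = ((‖P (R (b j))‖ ^ 2 : ℝ) : ℂ) := by
      conv_lhs => rw [← hPP (R (b j))]
      rw [← hP, inner_self_eq_norm_sq_to_K]
      norm_cast
    rw [h3]
    exact Complex.conj_ofReal _
  calc traceAlong b (γ ∘L P) = ∑' i, ∑' j, f i j := by
        simp only [traceAlong]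
        exact tsum_congr fun i => (key1 i).symm
    _ = ∑' j, ∑' i, f i j := (Summable.tsum_comm hgsum).symm
    _ = ∑' j, ((‖P (R (b j))‖ ^ 2 : ℝ) : ℂ) := tsum_congr key2
    _ = ((∑' j, ‖P (R (b j))‖ ^ 2 : ℝ) : ℂ) := (Complex.ofReal_tsum _).symm
end Helpers


set_option maxHeartbeats 1000000 in
set_option synthInstance.maxHeartbeats 200000 in
/-- for a density matrix `γ` on `H₁ ⊗ H₂` with partial traces
`γ^{(1,0)}`, `γ^{(0,1)}` (whose expectations `⟨u, γ^{(1,0)} u⟩ = Tr(γ (|u⟩⟨u| ⊗ 1))`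
and `⟨v, γ^{(0,1)} v⟩ = Tr(γ (1 ⊗ |v⟩⟨v|))`), one has
`max{1 − ⟨u, γ^{(1,0)} u⟩, 1 − ⟨v, γ^{(0,1)} v⟩} ≤ 1 − ⟨u ⊗ v, γ (u ⊗ v)⟩
  ≤ (1 − ⟨u, γ^{(1,0)} u⟩) + (1 − ⟨v, γ^{(0,1)} v⟩)`. -/
theorem partialTrace_condensation_bounds {H₁ H₂ H : Type}
    [NormedAddCommGroup H₁] [InnerProductSpace ℂ H₁] [CompleteSpace H₁]
    [NormedAddCommGroup H₂] [InnerProductSpace ℂ H₂] [CompleteSpace H₂]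
    [NormedAddCommGroup H] [InnerProductSpace ℂ H] [CompleteSpace H]
    (t : H₁ →ₗ[ℂ] H₂ →ₗ[ℂ] H) (ht : IsHilbertTensorProduct t)
    (u : H₁) (hu : ‖u‖ = 1) (v : H₂) (hv : ‖v‖ = 1)
    (γ : H →L[ℂ] H) (hγ : IsDensityMatrix γ)
    (pA pB : H →L[ℂ] H)
    (hpA : ∀ x y, pA (t x y) = t (rankOne u x) y)
    (hpB : ∀ x y, pB (t x y) = t x (rankOne v y)) :
    ∀ (ι : Type) (b : HilbertBasis ι ℂ H),
      max (1 - (traceAlong b (γ ∘L pA)).re) (1 - (traceAlong b (γ ∘L pB)).re)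
        ≤ 1 - (⟪t u v, γ (t u v)⟫_ℂ).re ∧
      1 - (⟪t u v, γ (t u v)⟫_ℂ).re
        ≤ (1 - (traceAlong b (γ ∘L pA)).re) + (1 - (traceAlong b (γ ∘L pB)).re) := by
  intro ι b
  obtain ⟨hti, htd⟩ := ht
  have hd : Dense ((Submodule.span ℂ {z : H | ∃ x y, z = t x y}) : Set H) :=
    Submodule.dense_iff_topologicalClosure_eq_top.mpr htd
  have hext : ∀ (f g : H →L[ℂ] H), (∀ x y, f (t x y) = g (t x y)) → f = g := by
    intro f g h
    apply ContinuousLinearMap.ext_on hd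
    rintro z ⟨x, y, rfl⟩
    exact h x y
  have huu : ⟪u, u⟫_ℂ = 1 := by
    rw [inner_self_eq_norm_sq_to_K, hu]; norm_num
  have hvv : ⟪v, v⟫_ℂ = 1 := by
    rw [inner_self_eq_norm_sq_to_K, hv]; norm_num
  set w := t u v with hw
  have hww : ⟪w, w⟫_ℂ = 1 := by rw [hw, hti, huu, hvv, one_mul]
  have hwn : ‖w‖ = 1 := by
    have h1 := hww
    rw [inner_self_eq_norm_sq_to_K] at h1
    have h2 : ((‖w‖ ^ 2 : ℝ) : ℂ) = ((1 : ℝ) : ℂ) := by push_cast; simpa using h1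
    have h3 : ‖w‖ ^ 2 = 1 := Complex.ofReal_inj.mp h2
    nlinarith [norm_nonneg w]
  set Q := rankOne w with hQdef
  have hQap : ∀ z : H, Q z = ⟪w, z⟫_ℂ • w := fun z => by
    simp [hQdef, rankOne]
  have hrO : ∀ (u' : H₁) (x : H₁), rankOne u' x = ⟪u', x⟫_ℂ • u' := fun u' x => by
    simp [rankOne]
  have hrO2 : ∀ (v' : H₂) (y : H₂), rankOne v' y = ⟪v', y⟫_ℂ • v' := fun v' y => by
    simp [rankOne]
  -- composition identities
  have hAA : pA ∘L pA = pA := by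
    apply hext; intro x y
    simp only [ContinuousLinearMap.comp_apply, hpA]
    congr 1
    simp [hrO, inner_smul_right, huu, smul_smul, hu]
  have hBB : pB ∘L pB = pB := by
    apply hext; intro x y
    simp only [ContinuousLinearMap.comp_apply, hpB]
    congr 1
    simp [hrO2, inner_smul_right, hvv, smul_smul, hv]
  have hABQ : pA ∘L pB = Q := by
    apply hext; intro x y
    simp only [ContinuousLinearMap.comp_apply, hpB, hpA]
    rw [hQap, hrO, hrO2, hw]
    simp only [_root_.map_smul, LinearMap.smul_apply, hti, smul_smul]
    first
    | rfl
    | (congr 1; ring)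
  have hBAQ : pB ∘L pA = Q := by
    apply hext; intro x y
    simp only [ContinuousLinearMap.comp_apply, hpA, hpB]
    rw [hQap, hrO, hrO2, hw]
    simp only [_root_.map_smul, LinearMap.smul_apply, hti, smul_smul]
    first
    | rfl
    | (congr 1; ring)
  have hQA : Q ∘L pA = Q := by
    apply hext; intro x y
    simp only [ContinuousLinearMap.comp_apply, hpA]
    rw [hQap, hQap, hrO, hw]
    simp only [_root_.map_smul, LinearMap.smul_apply, hti, inner_smul_right, huu, smul_smul]
    first
    | rfl
    | (congr 1; ring)
  have hQB : Q ∘L pB = Q := by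
    apply hext; intro x y
    simp only [ContinuousLinearMap.comp_apply, hpB]
    rw [hQap, hQap, hrO2, hw]
    simp only [_root_.map_smul, LinearMap.smul_apply, hti, inner_smul_right, hvv, smul_smul]
    first
    | rfl
    | (congr 1; ring)
  have hpAw : pA w = w := by
    rw [hw, hpA, hrO, huu, one_smul]
  have hpBw : pB w = w := by
    rw [hw, hpB, hrO2, hvv, one_smul]
  have hAQz : ∀ z, pA (Q z) = Q z := by
    intro z; rw [hQap, _root_.map_smul, hpAw]
  have hBQz : ∀ z, pB (Q z) = Q z := by
    intro z; rw [hQap, _root_.map_smul, hpBw]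
  have hQQz : ∀ z, Q (Q z) = Q z := by
    intro z; rw [hQap, hQap z, inner_smul_right, hww, mul_one]
  -- self-adjointness
  have hQsa : ∀ z z' : H, ⟪Q z, z'⟫_ℂ = ⟪z, Q z'⟫_ℂ := by
    intro z z'
    rw [hQap, hQap, inner_smul_left, inner_smul_right, inner_conj_symm]
    ring
  have hsa_of : ∀ (T : H →L[ℂ] H),
      (∀ x y x' y', ⟪T (t x y), t x' y'⟫_ℂ = ⟪t x y, T (t x' y')⟫_ℂ) →
      ∀ z z' : H, ⟪T z, z'⟫_ℂ = ⟪z, T z'⟫_ℂ := by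
    intro T h
    have step1 : ∀ x y (z' : H), ⟪T (t x y), z'⟫_ℂ = ⟪t x y, T z'⟫_ℂ := by
      intro x y
      have heq : innerSL ℂ (T (t x y)) = (innerSL ℂ (t x y)).comp T := by
        apply ContinuousLinearMap.ext_on hd
        rintro z ⟨x', y', rfl⟩
        simpa using h x y x' y'
      intro z'
      have := DFunLike.congr_fun heq z'
      simpa using this
    have step2 : ∀ (z' z : H), ⟪z', T z⟫_ℂ = ⟪T z', z⟫_ℂ := by
      intro z'
      have heq : (innerSL ℂ z').comp T = innerSL ℂ (T z') := by
        apply ContinuousLinearMap.ext_on hd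
        rintro z ⟨x, y, rfl⟩
        simp only [ContinuousLinearMap.comp_apply, innerSL_apply_apply]
        calc ⟪z', T (t x y)⟫_ℂ = (starRingEnd ℂ) ⟪T (t x y), z'⟫_ℂ :=
              (inner_conj_symm z' _).symm
          _ = (starRingEnd ℂ) ⟪t x y, T z'⟫_ℂ := by rw [step1]
          _ = ⟪T z', t x y⟫_ℂ := inner_conj_symm _ _
      intro z
      have := DFunLike.congr_fun heq z
      simpa using this
    intro z z'
    calc ⟪T z, z'⟫_ℂ = (starRingEnd ℂ) ⟪z', T z⟫_ℂ := (inner_conj_symm _ _).symm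
      _ = (starRingEnd ℂ) ⟪T z', z⟫_ℂ := by rw [step2]
      _ = ⟪z, T z'⟫_ℂ := inner_conj_symm _ _
  have hAsa : ∀ z z' : H, ⟪pA z, z'⟫_ℂ = ⟪z, pA z'⟫_ℂ := by
    apply hsa_of
    intro x y x' y'
    rw [hpA, hpA, hrO, hrO]
    simp only [_root_.map_smul, LinearMap.smul_apply, inner_smul_left, inner_smul_right, hti,
      inner_conj_symm]
    ring
  have hBsa : ∀ z z' : H, ⟪pB z, z'⟫_ℂ = ⟪z, pB z'⟫_ℂ := by
    apply hsa_of
    intro x y x' y'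
    rw [hpB, hpB, hrO2, hrO2]
    simp only [_root_.map_smul, inner_smul_left, inner_smul_right, hti, inner_conj_symm]
    ring
  -- the square root of γ
  have hpos : (0 : H →L[ℂ] H) ≤ γ := (ContinuousLinearMap.nonneg_iff_isPositive γ).mpr hγ.1
  set R := CFC.sqrt γ with hRdef
  have hRsa : IsSelfAdjoint R := IsSelfAdjoint.of_nonneg (CFC.sqrt_nonneg γ)
  have hRmul : R * R = γ := CFC.sqrt_mul_sqrt_self γ hpos
  have hRR : ∀ z, R (R z) = γ z := fun z => by rw [← hRmul]; rfl
  have hRinner : ∀ z z' : H, ⟪R z, z'⟫_ℂ = ⟪z, R z'⟫_ℂ := by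
    intro z z'
    have hadj : ContinuousLinearMap.adjoint R = R := by
      rw [← ContinuousLinearMap.star_eq_adjoint]
      exact hRsa
    conv_lhs => rw [← hadj]
    exact ContinuousLinearMap.adjoint_inner_left R z' z
  -- trace of γ along b
  have hterm : ∀ z : H, ⟪z, γ z⟫_ℂ = ((‖R z‖ ^ 2 : ℝ) : ℂ) := by
    intro z
    rw [← hRR, ← hRinner, inner_self_eq_norm_sq_to_K]
    norm_cast
  have htr : (∑' i, ((‖R (b i)‖ ^ 2 : ℝ) : ℂ)) = 1 := by
    have h1 := hγ.2 ι b
    simp only [traceAlong] at h1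
    calc (∑' i, ((‖R (b i)‖ ^ 2 : ℝ) : ℂ)) = ∑' i, ⟪b i, γ (b i)⟫_ℂ :=
          tsum_congr fun i => (hterm (b i)).symm
      _ = 1 := h1
  have hsum : Summable fun i => ‖R (b i)‖ ^ 2 := by
    by_contra hns
    have hns' : ¬ Summable (fun i => ((‖R (b i)‖ ^ 2 : ℝ) : ℂ)) :=
      fun hs => hns (Complex.summable_ofReal.mp hs)
    rw [tsum_eq_zero_of_not_summable hns'] at htr
    exact one_ne_zero htr.symm
  have hsum1 : ∑' i, ‖R (b i)‖ ^ 2 = 1 := by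
    have h2 := htr
    rw [← Complex.ofReal_tsum] at h2
    exact_mod_cast h2
  -- pointwise idempotency
  have hAid : ∀ z, pA (pA z) = pA z := fun z => by
    conv_lhs => rw [← ContinuousLinearMap.comp_apply, hAA]
  have hBid : ∀ z, pB (pB z) = pB z := fun z => by
    conv_lhs => rw [← ContinuousLinearMap.comp_apply, hBB]
  have hABz : ∀ z, pA (pB z) = Q z := fun z => by
    conv_lhs => rw [← ContinuousLinearMap.comp_apply, hABQ]
  have hBAz : ∀ z, pB (pA z) = Q z := fun z => by
    conv_lhs => rw [← ContinuousLinearMap.comp_apply, hBAQ]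
  have hQAz : ∀ z, Q (pA z) = Q z := fun z => by
    conv_lhs => rw [← ContinuousLinearMap.comp_apply, hQA]
  have hQBz : ∀ z, Q (pB z) = Q z := fun z => by
    conv_lhs => rw [← ContinuousLinearMap.comp_apply, hQB]
  -- traces as sums of squares
  have hmA := traceAlong_eq_tsum_sq b γ R pA hRinner hRR hAsa hAid hsum
  have hmB := traceAlong_eq_tsum_sq b γ R pB hRinner hRR hBsa hBid hsum
  -- contraction facts
  have hAc : ∀ x : H, ‖pA x‖ ≤ ‖x‖ := clm_sa_contraction pA hAsa hAid
  have hBc : ∀ x : H, ‖pB x‖ ≤ ‖x‖ := clm_sa_contraction pB hBsa hBid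
  have hQc : ∀ x : H, ‖Q x‖ ≤ ‖x‖ := clm_sa_contraction Q hQsa hQQz
  have hsumA : Summable fun j => ‖pA (R (b j))‖ ^ 2 :=
    hsum.of_nonneg_of_le (fun j => sq_nonneg _)
      (fun j => pow_le_pow_left₀ (norm_nonneg _) (hAc _) 2)
  have hsumB : Summable fun j => ‖pB (R (b j))‖ ^ 2 :=
    hsum.of_nonneg_of_le (fun j => sq_nonneg _)
      (fun j => pow_le_pow_left₀ (norm_nonneg _) (hBc _) 2)
  -- the Q-sum
  have hQRval : ∀ x : H, ‖Q x‖ = ‖⟪w, x⟫_ℂ‖ := fun x => by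
    rw [hQap, norm_smul, hwn, mul_one]
  have hsQ : HasSum (fun j => ‖Q (R (b j))‖ ^ 2) (‖R w‖ ^ 2) := by
    have h := hasSum_norm_inner_sq b (R w)
    have he : (fun j => ‖Q (R (b j))‖ ^ 2) = fun j => ‖⟪R w, b j⟫_ℂ‖ ^ 2 := by
      funext j
      rw [hQRval, hRinner w (b j)]
    rw [he]
    exact h
  have hcval : (⟪w, γ w⟫_ℂ).re = ‖R w‖ ^ 2 := by
    rw [hterm w]
    exact Complex.ofReal_re _
  -- rewrite the goal
  rw [hmA, hmB, Complex.ofReal_re, Complex.ofReal_re, hcval, ← hsQ.tsum_eq]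
  -- key inequalities
  have hqa : ∑' j, ‖Q (R (b j))‖ ^ 2 ≤ ∑' j, ‖pA (R (b j))‖ ^ 2 := by
    refine Summable.tsum_le_tsum (fun j => ?_) hsQ.summable hsumA
    have h1 : ‖Q (R (b j))‖ ≤ ‖pA (R (b j))‖ := by
      calc ‖Q (R (b j))‖ = ‖Q (pA (R (b j)))‖ := by rw [hQAz]
        _ ≤ ‖pA (R (b j))‖ := hQc _
    exact pow_le_pow_left₀ (norm_nonneg _) h1 2
  have hqb : ∑' j, ‖Q (R (b j))‖ ^ 2 ≤ ∑' j, ‖pB (R (b j))‖ ^ 2 := by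
    refine Summable.tsum_le_tsum (fun j => ?_) hsQ.summable hsumB
    have h1 : ‖Q (R (b j))‖ ≤ ‖pB (R (b j))‖ := by
      calc ‖Q (R (b j))‖ = ‖Q (pB (R (b j)))‖ := by rw [hQBz]
        _ ≤ ‖pB (R (b j))‖ := hQc _
    exact pow_le_pow_left₀ (norm_nonneg _) h1 2
  have hkey : ∀ x : H, ‖pA x‖ ^ 2 + ‖pB x‖ ^ 2 ≤ ‖x‖ ^ 2 + ‖Q x‖ ^ 2 := by
    intro x
    set E : H →L[ℂ] H := pA + pB - Q with hE
    have hEap : ∀ z, E z = pA z + pB z - Q z := fun z => by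
      simp [hE]
    have hEsa : ∀ z z' : H, ⟪E z, z'⟫_ℂ = ⟪z, E z'⟫_ℂ := by
      intro z z'
      simp only [hEap, inner_sub_left, inner_add_left, inner_sub_right, inner_add_right,
        hAsa, hBsa, hQsa]
    have hEid : ∀ z, E (E z) = E z := by
      intro z
      have e1 : pA (E z) = pA z := by
        rw [hEap z]
        simp only [map_add, map_sub, hAid, hABz, hAQz]
        abel
      have e2 : pB (E z) = pB z := by
        rw [hEap z]
        simp only [map_add, map_sub, hBid, hBAz, hBQz]
        abel
      have e3 : Q (E z) = Q z := by
        rw [hEap z]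
        simp only [map_add, map_sub, hQAz, hQBz, hQQz]
        abel
      rw [hEap (E z), e1, e2, e3, hEap z]
    have hcontr := clm_sa_contraction E hEsa hEid x
    have h4 : ((‖E x‖ ^ 2 : ℝ) : ℂ)
        = ((‖pA x‖ ^ 2 : ℝ) : ℂ) + ((‖pB x‖ ^ 2 : ℝ) : ℂ) - ((‖Q x‖ ^ 2 : ℝ) : ℂ) := by
      rw [← inner_sa_idem E hEsa hEid x, ← inner_sa_idem pA hAsa hAid x,
        ← inner_sa_idem pB hBsa hBid x, ← inner_sa_idem Q hQsa hQQz x]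
      rw [hEap]
      simp [inner_add_right, inner_sub_right]
    have h5 : ‖E x‖ ^ 2 = ‖pA x‖ ^ 2 + ‖pB x‖ ^ 2 - ‖Q x‖ ^ 2 := by exact_mod_cast h4
    nlinarith [norm_nonneg x, norm_nonneg (E x)]
  have hab : (∑' j, ‖pA (R (b j))‖ ^ 2) + (∑' j, ‖pB (R (b j))‖ ^ 2)
      ≤ 1 + ∑' j, ‖Q (R (b j))‖ ^ 2 := by
    rw [← Summable.tsum_add hsumA hsumB, ← hsum1, ← Summable.tsum_add hsum hsQ.summable]
    exact Summable.tsum_le_tsum (fun j => hkey (R (b j))) (hsumA.add hsumB) (hsum.add hsQ.summable)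
  constructor
  · apply max_le <;> linarith
  · linarith
end

section
/- Let H₁, H₂ be Hilbert spaces, γ a density matrix on H₁ ⊗ H₂, u ∈ H₁, v ∈ H₂ unit vectors, and suppose 1 − ⟨u⊗v, γ (u⊗v)⟩ ≤ ε for some ε ∈ [0,1]. Then for every bounded operator A on H₁ with ‖A‖ ≤ 1, |Tr(γ (A ⊗ 1)) − ⟨u, A u⟩| ≤ C √ε for a universal constant C. -/
open scoped InnerProductSpace ComplexConjugate
open Filter MeasureTheory

set_option synthInstance.maxHeartbeats 1000000
set_option maxHeartbeats 2000000
set_option linter.unusedSectionVars false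

section AuxLemmas

lemma tsum_mul_le_sqrt {ι : Type} (f g : ι → ℝ) (hf : ∀ i, 0 ≤ f i) (hg : ∀ i, 0 ≤ g i)
    (hf2 : Summable (fun i => f i ^ 2)) (hg2 : Summable (fun i => g i ^ 2)) :
    ∑' i, f i * g i ≤ Real.sqrt (∑' i, f i ^ 2) * Real.sqrt (∑' i, g i ^ 2) := by
  have hsum : Summable (fun i => f i * g i) := by
    refine Summable.of_nonneg_of_le (fun i => mul_nonneg (hf i) (hg i))
      (fun i => ?_) ((hf2.add hg2).div_const 2)
    nlinarith [sq_nonneg (f i - g i)]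
  refine Summable.tsum_le_of_sum_le hsum (fun s => ?_)
  have h1 : (∑ i ∈ s, f i * g i) ^ 2 ≤ (∑ i ∈ s, f i ^ 2) * (∑ i ∈ s, g i ^ 2) :=
    Finset.sum_mul_sq_le_sq_mul_sq s f g
  have hs0 : 0 ≤ ∑ i ∈ s, f i * g i := Finset.sum_nonneg fun i _ => mul_nonneg (hf i) (hg i)
  calc ∑ i ∈ s, f i * g i = Real.sqrt ((∑ i ∈ s, f i * g i) ^ 2) := (Real.sqrt_sq hs0).symm
    _ ≤ Real.sqrt ((∑ i ∈ s, f i ^ 2) * (∑ i ∈ s, g i ^ 2)) := Real.sqrt_le_sqrt h1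
    _ = Real.sqrt (∑ i ∈ s, f i ^ 2) * Real.sqrt (∑ i ∈ s, g i ^ 2) :=
        Real.sqrt_mul (Finset.sum_nonneg fun i _ => sq_nonneg _) _
    _ ≤ _ := by
        gcongr
        · exact Summable.sum_le_tsum s (fun i _ => sq_nonneg _) hf2
        · exact Summable.sum_le_tsum s (fun i _ => sq_nonneg _) hg2

lemma parseval_sq {H : Type} [NormedAddCommGroup H] [InnerProductSpace ℂ H] [CompleteSpace H]
    {ι : Type} (b : HilbertBasis ι ℂ H) (y : H) :
    HasSum (fun i => ‖⟪b i, y⟫_ℂ‖ ^ 2) (‖y‖ ^ 2) := by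
  have h := (b.hasSum_inner_mul_inner y y).mapL Complex.reCLM
  have e2 : Complex.reCLM ⟪y, y⟫_ℂ = ‖y‖ ^ 2 := by
    simpa using (inner_self_eq_norm_sq (𝕜 := ℂ) y)
  rw [e2] at h
  refine h.congr_fun (fun i => ?_)
  have hz : ⟪y, b i⟫_ℂ = conj ⟪b i, y⟫_ℂ := by rw [inner_conj_symm]
  simp only [Complex.reCLM_apply, hz, Complex.mul_re, Complex.conj_re, Complex.conj_im,
    Complex.sq_norm, Complex.normSq_apply]
  ring

section
variable {H : Type} [NormedAddCommGroup H] [InnerProductSpace ℂ H] [CompleteSpace H]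
  {ι : Type} (b : HilbertBasis ι ℂ H)



lemma sa_op_norm_le (S : H →L[ℂ] H) (hS : ∀ x y : H, ⟪S x, y⟫_ℂ = ⟪x, S y⟫_ℂ)
    (htr : HasSum (fun j => ‖S (b j)‖ ^ 2) 1) (x : H) : ‖S x‖ ≤ ‖x‖ := by
  have hp := parseval_sq b (S x)
  have hle : ‖S x‖ ^ 2 ≤ ‖x‖ ^ 2 := by
    have h1 : ‖S x‖ ^ 2 = ∑' j, ‖⟪b j, S x⟫_ℂ‖ ^ 2 := hp.tsum_eq.symm
    have h2 : ∑' j, ‖⟪b j, S x⟫_ℂ‖ ^ 2 ≤ ∑' j, ‖S (b j)‖ ^ 2 * ‖x‖ ^ 2 := by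
      refine Summable.tsum_le_tsum (fun j => ?_) hp.summable (htr.summable.mul_right _)
      rw [← hS]
      calc ‖⟪S (b j), x⟫_ℂ‖ ^ 2 ≤ (‖S (b j)‖ * ‖x‖) ^ 2 := by
            have := norm_inner_le_norm (𝕜 := ℂ) (S (b j)) x
            exact pow_le_pow_left₀ (norm_nonneg _) this 2
        _ = ‖S (b j)‖ ^ 2 * ‖x‖ ^ 2 := by ring
    have h3 : ∑' j, ‖S (b j)‖ ^ 2 * ‖x‖ ^ 2 = ‖x‖ ^ 2 := by
      rw [tsum_mul_right, htr.tsum_eq, one_mul]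
    linarith
  have := Real.sqrt_le_sqrt hle
  rwa [Real.sqrt_sq (norm_nonneg _), Real.sqrt_sq (norm_nonneg _)] at this

lemma hs_comp_bound (S T : H →L[ℂ] H) (hS : ∀ x y : H, ⟪S x, y⟫_ℂ = ⟪x, S y⟫_ℂ)
    (hT : ∀ z : H, ‖ContinuousLinearMap.adjoint T z‖ ≤ ‖z‖)
    (htr : HasSum (fun j => ‖S (b j)‖ ^ 2) 1) :
    Summable (fun i => ‖S (T (b i))‖ ^ 2) ∧ ∑' i, ‖S (T (b i))‖ ^ 2 ≤ 1 := by
  set F : ι → ι → ENNReal := fun i j => ENNReal.ofReal (‖⟪S (b j), T (b i)⟫_ℂ‖ ^ 2) with hF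
  have step1 : ∀ i, ∑' j, F i j = ENNReal.ofReal (‖S (T (b i))‖ ^ 2) := by
    intro i
    have hp := parseval_sq b (S (T (b i)))
    have he : ∀ j, F i j = ENNReal.ofReal (‖⟪b j, S (T (b i))⟫_ℂ‖ ^ 2) := by
      intro j; rw [hF]; simp only [hS]
    rw [tsum_congr he,
      ← ENNReal.ofReal_tsum_of_nonneg (fun j => sq_nonneg _) hp.summable, hp.tsum_eq]
  have step3 : ∀ j, ∑' i, F i j
      = ENNReal.ofReal (‖ContinuousLinearMap.adjoint T (S (b j))‖ ^ 2) := by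
    intro j
    have hp := parseval_sq b (ContinuousLinearMap.adjoint T (S (b j)))
    have he : ∀ i, F i j = ENNReal.ofReal (‖⟪b i, ContinuousLinearMap.adjoint T (S (b j))⟫_ℂ‖ ^ 2) := by
      intro i
      have h1 : ⟪S (b j), T (b i)⟫_ℂ = ⟪ContinuousLinearMap.adjoint T (S (b j)), b i⟫_ℂ :=
        (ContinuousLinearMap.adjoint_inner_left T (b i) (S (b j))).symm
      have h2 : ‖⟪ContinuousLinearMap.adjoint T (S (b j)), b i⟫_ℂ‖
          = ‖⟪b i, ContinuousLinearMap.adjoint T (S (b j))⟫_ℂ‖ := norm_inner_symm _ _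
      simp only [hF, h1, h2]
    rw [tsum_congr he,
      ← ENNReal.ofReal_tsum_of_nonneg (fun i => sq_nonneg _) hp.summable, hp.tsum_eq]
  have key : ∑' i, ENNReal.ofReal (‖S (T (b i))‖ ^ 2) ≤ 1 := by
    calc ∑' i, ENNReal.ofReal (‖S (T (b i))‖ ^ 2) = ∑' i, ∑' j, F i j := by
          exact (tsum_congr step1).symm
      _ = ∑' j, ∑' i, F i j := ENNReal.tsum_comm
      _ = ∑' j, ENNReal.ofReal (‖ContinuousLinearMap.adjoint T (S (b j))‖ ^ 2) := tsum_congr step3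
      _ ≤ ∑' j, ENNReal.ofReal (‖S (b j)‖ ^ 2) := by
          refine ENNReal.tsum_le_tsum (fun j => ?_)
          exact ENNReal.ofReal_le_ofReal (pow_le_pow_left₀ (norm_nonneg _) (hT _) 2)
      _ = ENNReal.ofReal 1 := by
          rw [← ENNReal.ofReal_tsum_of_nonneg (fun j => sq_nonneg _) htr.summable, htr.tsum_eq]
      _ = 1 := ENNReal.ofReal_one
  have hne : ∑' i, ENNReal.ofReal (‖S (T (b i))‖ ^ 2) ≠ ⊤ := by
    exact ne_top_of_le_ne_top ENNReal.one_ne_top key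
  have hsumm : Summable (fun i => ‖S (T (b i))‖ ^ 2) := by
    have := ENNReal.summable_toReal hne
    refine this.congr (fun i => ?_)
    exact ENNReal.toReal_ofReal (sq_nonneg _)
  refine ⟨hsumm, ?_⟩
  rw [← ENNReal.ofReal_one] at key
  rw [← ENNReal.ofReal_tsum_of_nonneg (fun i => sq_nonneg _) hsumm] at key
  exact (ENNReal.ofReal_le_ofReal_iff zero_le_one).mp key

end

section
variable {H₁ H₂ H : Type}
    [NormedAddCommGroup H₁] [InnerProductSpace ℂ H₁] [CompleteSpace H₁]
    [NormedAddCommGroup H₂] [InnerProductSpace ℂ H₂] [CompleteSpace H₂]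
    [NormedAddCommGroup H] [InnerProductSpace ℂ H] [CompleteSpace H]

lemma norm_sum_tensor (t : H₁ →ₗ[ℂ] H₂ →ₗ[ℂ] H)
    (ht : ∀ (x x' : H₁) (y y' : H₂), ⟪t x y, t x' y'⟫_ℂ = ⟪x, x'⟫_ℂ * ⟪y, y'⟫_ℂ)
    {m : ℕ} (e : Fin m → H₂) (he : ∀ j k, ⟪e j, e k⟫_ℂ = if j = k then 1 else 0)
    (ξ : Fin m → H₁) :
    ‖∑ j, t (ξ j) (e j)‖ ^ 2 = ∑ j, ‖ξ j‖ ^ 2 := by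
  have h1 : ⟪∑ j, t (ξ j) (e j), ∑ j, t (ξ j) (e j)⟫_ℂ = ∑ j, ⟪ξ j, ξ j⟫_ℂ := by
    rw [sum_inner]
    have : ∀ j ∈ Finset.univ, ⟪t (ξ j) (e j), ∑ k, t (ξ k) (e k)⟫_ℂ = ⟪ξ j, ξ j⟫_ℂ := by
      intro j _
      rw [inner_sum]
      have : ∀ k ∈ Finset.univ, ⟪t (ξ j) (e j), t (ξ k) (e k)⟫_ℂ
          = if j = k then ⟪ξ j, ξ j⟫_ℂ else 0 := by
        intro k _
        rw [ht, he]
        by_cases h : j = k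
        · subst h; simp
        · simp [h]
      rw [Finset.sum_congr rfl this, Finset.sum_ite_eq Finset.univ j (fun k => ⟪ξ j, ξ j⟫_ℂ)]
      simp
    exact Finset.sum_congr rfl this
  rw [← inner_self_eq_norm_sq (𝕜 := ℂ), h1, map_sum]
  exact Finset.sum_congr rfl fun j _ => inner_self_eq_norm_sq (𝕜 := ℂ) (ξ j)

lemma tensor_op_norm_le (t : H₁ →ₗ[ℂ] H₂ →ₗ[ℂ] H)
    (ht : ∀ (x x' : H₁) (y y' : H₂), ⟪t x y, t x' y'⟫_ℂ = ⟪x, x'⟫_ℂ * ⟪y, y'⟫_ℂ)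
    (hdense : (Submodule.span ℂ {z : H | ∃ x y, z = t x y}).topologicalClosure = ⊤)
    (A : H₁ →L[ℂ] H₁) (hA : ‖A‖ ≤ 1) (A' : H →L[ℂ] H)
    (hA' : ∀ x y, A' (t x y) = t (A x) y) (z : H) : ‖A' z‖ ≤ ‖z‖ := by
  set K : Set H := {w : H | ‖A' w‖ ≤ ‖w‖} with hK
  have hKclosed : IsClosed K := isClosed_le (A'.continuous.norm) continuous_norm
  have hspan : (Submodule.span ℂ {z : H | ∃ x y, z = t x y} : Set H) ⊆ K := by
    intro w hw
    rw [SetLike.mem_coe, Submodule.mem_span_set'] at hw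
    obtain ⟨n, c, g, hg⟩ := hw
    -- choose tensor representations
    have hrep : ∀ i : Fin n, ∃ x y, (g i : H) = t x y := fun i => (g i).2
    choose xs ys hxy using hrep
    -- finite dimensional subspace of H₂
    haveI : FiniteDimensional ℂ (Submodule.span ℂ (Set.range ys)) :=
      FiniteDimensional.span_of_finite ℂ (Set.finite_range ys)
    set V := Submodule.span ℂ (Set.range ys) with hV
    set m := Module.finrank ℂ V with hm
    set o := stdOrthonormalBasis ℂ V with ho
    set e : Fin m → H₂ := fun j => (o j : H₂) with he_def
    have he : ∀ j k, ⟪e j, e k⟫_ℂ = if j = k then 1 else 0 := by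
      intro j k
      have := orthonormal_iff_ite.mp o.orthonormal j k
      simpa [he_def, Submodule.coe_inner] using this
    -- coefficients
    set yv : Fin n → V := fun i => ⟨ys i, Submodule.subset_span (Set.mem_range_self i)⟩ with hyv
    set d : Fin n → Fin m → ℂ := fun i j => o.repr (yv i) j with hd
    have hys : ∀ i, ys i = ∑ j, d i j • e j := by
      intro i
      have := o.sum_repr (yv i)
      have := congrArg (Subtype.val : V → H₂) this
      simpa [he_def, hd] using this.symm
    set ξ : Fin m → H₁ := fun j => ∑ i, (c i * d i j) • xs i with hξ
    have hw_eq : w = ∑ j, t (ξ j) (e j) := by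
      rw [← hg]
      have : ∀ i ∈ Finset.univ, c i • (g i : H) = ∑ j, (c i * d i j) • t (xs i) (e j) := by
        intro i _
        rw [hxy i, hys i, map_sum, Finset.smul_sum]
        refine Finset.sum_congr rfl fun j _ => ?_
        rw [_root_.map_smul, smul_smul]
      rw [Finset.sum_congr rfl this, Finset.sum_comm]
      refine Finset.sum_congr rfl fun j _ => ?_
      have : t (ξ j) (e j) = ∑ i, (c i * d i j) • t (xs i) (e j) := by
        rw [hξ, map_sum]
        simp [LinearMap.sum_apply, LinearMap.smul_apply, _root_.map_smul]
      exact this.symm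
    have hAw_eq : A' w = ∑ j, t (A (ξ j)) (e j) := by
      rw [hw_eq, map_sum]
      exact Finset.sum_congr rfl fun j _ => hA' _ _
    have h1 : ‖w‖ ^ 2 = ∑ j, ‖ξ j‖ ^ 2 := by rw [hw_eq]; exact norm_sum_tensor t ht e he ξ
    have h2 : ‖A' w‖ ^ 2 = ∑ j, ‖A (ξ j)‖ ^ 2 := by
      rw [hAw_eq]; exact norm_sum_tensor t ht e he _
    have h3 : ‖A' w‖ ^ 2 ≤ ‖w‖ ^ 2 := by
      rw [h1, h2]
      refine Finset.sum_le_sum fun j _ => ?_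
      have := A.le_opNorm (ξ j)
      have h4 : ‖A (ξ j)‖ ≤ ‖ξ j‖ := le_trans this (by nlinarith [norm_nonneg (ξ j)])
      exact pow_le_pow_left₀ (norm_nonneg _) h4 2
    have := Real.sqrt_le_sqrt h3
    rwa [Real.sqrt_sq (norm_nonneg _), Real.sqrt_sq (norm_nonneg _)] at this
  have hzmem : z ∈ closure (Submodule.span ℂ {z : H | ∃ x y, z = t x y} : Set H) := by
    have : z ∈ (Submodule.span ℂ {z : H | ∃ x y, z = t x y}).topologicalClosure := by
      rw [hdense]; trivial
    exact this
  exact hKclosed.closure_subset_iff.mpr hspan hzmem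

end

end AuxLemmas

/-- there is a universal constant `C` such that whenever `γ` is a
density matrix on `H₁ ⊗ H₂` with `1 − ⟨u⊗v, γ (u⊗v)⟩ ≤ ε`, every one-body
observable `A` of the first species with `‖A‖ ≤ 1` satisfies
`|Tr(γ (A ⊗ 1)) − ⟨u, A u⟩| ≤ C √ε`. -/
theorem one_body_observables_bound :
    ∃ C : ℝ, 0 < C ∧
      ∀ (H₁ H₂ H : Type)
        [NormedAddCommGroup H₁] [InnerProductSpace ℂ H₁] [CompleteSpace H₁]
        [NormedAddCommGroup H₂] [InnerProductSpace ℂ H₂] [CompleteSpace H₂]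
        [NormedAddCommGroup H] [InnerProductSpace ℂ H] [CompleteSpace H]
        (t : H₁ →ₗ[ℂ] H₂ →ₗ[ℂ] H), IsHilbertTensorProduct t →
        ∀ (u : H₁), ‖u‖ = 1 → ∀ (v : H₂), ‖v‖ = 1 →
        ∀ (γ : H →L[ℂ] H), IsDensityMatrix γ →
        ∀ ε : ℝ, ε ∈ Set.Icc (0:ℝ) 1 →
        1 - (⟪t u v, γ (t u v)⟫_ℂ).re ≤ ε →
        ∀ (A : H₁ →L[ℂ] H₁), ‖A‖ ≤ 1 →
        ∀ (A' : H →L[ℂ] H), (∀ x y, A' (t x y) = t (A x) y) →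
        ∀ (ι : Type) (b : HilbertBasis ι ℂ H),
          ‖traceAlong b (γ ∘L A') - ⟪u, A u⟫_ℂ‖
            ≤ C * Real.sqrt ε := by
  refine ⟨3, by norm_num, ?_⟩
  intro H₁ H₂ H _ _ _ _ _ _ _ _ _ t htp u hu v hv γ hγ ε hε hεγ A hA A' hA' ι b
  obtain ⟨ht, hdense⟩ := htp
  obtain ⟨hpos, htr_all⟩ := hγ
  have hγ0 : (0 : H →L[ℂ] H) ≤ γ := (ContinuousLinearMap.nonneg_iff_isPositive γ).2 hpos
  set S := CFC.sqrt γ with hSdef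
  have hS0 : (0 : H →L[ℂ] H) ≤ S := CFC.sqrt_nonneg (a := γ)
  have hSsa : IsSelfAdjoint S := IsSelfAdjoint.of_nonneg hS0
  have hS : ∀ x y : H, ⟪S x, y⟫_ℂ = ⟪x, S y⟫_ℂ := by
    intro x y
    conv_lhs => rw [← hSsa.adjoint_eq]
    exact ContinuousLinearMap.adjoint_inner_left _ _ _
  have hγS : ∀ x : H, γ x = S (S x) := by
    intro x
    conv_lhs => rw [← CFC.sqrt_mul_sqrt_self γ hγ0]
    rfl
  set w := t u v with hwdef
  have hww : ⟪w, w⟫_ℂ = 1 := by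
    rw [hwdef, ht, inner_self_eq_norm_sq_to_K, inner_self_eq_norm_sq_to_K, hu, hv]
    norm_num
  have hwnorm : ‖w‖ = 1 := by
    have h := inner_self_eq_norm_sq (𝕜 := ℂ) w
    rw [hww] at h
    simp at h
    nlinarith [norm_nonneg w]
  -- trace of γ along b as real HasSum
  have htr := htr_all ι b
  have hsum_tr : Summable (fun i => ⟪b i, γ (b i)⟫_ℂ) := by
    by_contra h
    rw [traceAlong, tsum_eq_zero_of_not_summable h] at htr
    exact one_ne_zero htr.symm
  have htr1 : HasSum (fun i => ⟪b i, γ (b i)⟫_ℂ) 1 := by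
    have := hsum_tr.hasSum
    rwa [show ∑' i, ⟪b i, γ (b i)⟫_ℂ = 1 from htr] at this
  have htrS : HasSum (fun i => ‖S (b i)‖ ^ 2) 1 := by
    have h := htr1.mapL Complex.reCLM
    simp only [Complex.reCLM_apply, Complex.one_re] at h
    refine h.congr_fun (fun i => ?_)
    rw [hγS, ← hS]
    simpa using (inner_self_eq_norm_sq (𝕜 := ℂ) (S (b i))).symm
  have hSnorm : ∀ x : H, ‖S x‖ ≤ ‖x‖ := sa_op_norm_le b S hS htrS
  have hA'norm : ∀ z : H, ‖A' z‖ ≤ ‖z‖ := tensor_op_norm_le t ht hdense A hA A' hA'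
  have hA'op : ‖A'‖ ≤ 1 := A'.opNorm_le_bound zero_le_one (fun z => by simpa using hA'norm z)
  have hA'star : ∀ z : H, ‖ContinuousLinearMap.adjoint A' z‖ ≤ ‖z‖ := by
    intro z
    calc ‖ContinuousLinearMap.adjoint A' z‖ ≤ ‖ContinuousLinearMap.adjoint A'‖ * ‖z‖ :=
          (ContinuousLinearMap.adjoint A').le_opNorm z
      _ ≤ 1 * ‖z‖ := by
          have : ‖ContinuousLinearMap.adjoint A'‖ = ‖A'‖ := by
            exact ContinuousLinearMap.adjoint.norm_map A'
          rw [this]; exact mul_le_mul_of_nonneg_right hA'op (norm_nonneg z)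
      _ = ‖z‖ := one_mul _
  obtain ⟨hg2summ, hg2le⟩ := hs_comp_bound b S A' hS hA'star htrS
  -- eta
  set η := 1 - ‖S w‖ ^ 2 with hηdef
  have hSw1 : ‖S w‖ ≤ 1 := by simpa [hwnorm] using hSnorm w
  have hη0 : 0 ≤ η := by rw [hηdef]; nlinarith [norm_nonneg (S w)]
  have hwγ : (⟪w, γ w⟫_ℂ).re = ‖S w‖ ^ 2 := by
    rw [hγS, ← hS]
    simpa using inner_self_eq_norm_sq (𝕜 := ℂ) (S w)
  have hηε : η ≤ ε := by
    rw [hηdef, ← hwγ]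
    exact hεγ
  -- key HasSum
  set f : ι → H := fun i => S (b i) - ⟪w, b i⟫_ℂ • S w with hfdef
  have hkey : HasSum (fun i => ‖f i‖ ^ 2) η := by
    have h2 : HasSum (fun i => (⟪S (b i), ⟪w, b i⟫_ℂ • S w⟫_ℂ).re) (‖S w‖ ^ 2) := by
      have hterm : ∀ i, ⟪S (b i), ⟪w, b i⟫_ℂ • S w⟫_ℂ = ⟪w, b i⟫_ℂ * ⟪b i, γ w⟫_ℂ := by
        intro i
        rw [inner_smul_right, hS, ← hγS]
      have h := (b.hasSum_inner_mul_inner w (γ w)).mapL Complex.reCLM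
      rw [show Complex.reCLM ⟪w, γ w⟫_ℂ = ‖S w‖ ^ 2 from hwγ] at h
      refine h.congr_fun (fun i => ?_)
      rw [hterm i]
      rfl
    have h3 : HasSum (fun i => ‖⟪w, b i⟫_ℂ • S w‖ ^ 2) (1 * ‖S w‖ ^ 2) := by
      have h := (parseval_sq b w).mul_right (‖S w‖ ^ 2)
      rw [hwnorm] at h
      have h' : HasSum (fun i => ‖⟪b i, w⟫_ℂ‖ ^ 2 * ‖S w‖ ^ 2) (1 * ‖S w‖ ^ 2) := by
        rw [one_pow] at h
        exact h
      refine h'.congr_fun (fun i => ?_)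
      rw [norm_smul, mul_pow, norm_inner_symm w (b i)]
    have hcomb := (htrS.sub (h2.mul_left 2)).add h3
    have : (1 : ℝ) - 2 * ‖S w‖ ^ 2 + 1 * ‖S w‖ ^ 2 = η := by rw [hηdef]; ring
    rw [this] at hcomb
    refine hcomb.congr_fun (fun i => ?_)
    show ‖S (b i) - ⟪w, b i⟫_ℂ • S w‖ ^ 2 = _
    rw [norm_sub_sq (𝕜 := ℂ)]
    have hre : RCLike.re ⟪S (b i), ⟪w, b i⟫_ℂ • S w⟫_ℂ = (⟪S (b i), ⟪w, b i⟫_ℂ • S w⟫_ℂ).re := rfl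
    rw [hre]
  set g : ι → H := fun i => S (A' (b i)) with hgdef
  -- trace decomposition
  set x₀ := ContinuousLinearMap.adjoint A' (γ w) with hx₀
  have hterm : ∀ i, ⟪b i, (γ ∘L A') (b i)⟫_ℂ = ⟪x₀, b i⟫_ℂ * ⟪b i, w⟫_ℂ + ⟪f i, g i⟫_ℂ := by
    intro i
    have e1 : ⟪b i, (γ ∘L A') (b i)⟫_ℂ = ⟪S (b i), g i⟫_ℂ := by
      rw [ContinuousLinearMap.comp_apply, hγS, ← hS, hgdef]
    have e2 : S (b i) = f i + ⟪w, b i⟫_ℂ • S w := by rw [hfdef]; simp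
    rw [e1, e2, inner_add_left, inner_smul_left]
    have e3 : ⟪S w, g i⟫_ℂ = ⟪x₀, b i⟫_ℂ := by
      rw [hgdef, hx₀]
      rw [show ⟪S w, S (A' (b i))⟫_ℂ = ⟪γ w, A' (b i)⟫_ℂ by rw [← hS, ← hγS]]
      exact (ContinuousLinearMap.adjoint_inner_left A' (b i) (γ w)).symm
    rw [e3]
    have : (starRingEnd ℂ) ⟪w, b i⟫_ℂ = ⟪b i, w⟫_ℂ := by rw [inner_conj_symm]
    rw [this]
    ring
  have hfg_summ : Summable (fun i => ⟪f i, g i⟫_ℂ) := by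
    refine Summable.of_norm_bounded (((hkey.summable.add hg2summ).div_const 2)) (fun i => ?_)
    calc ‖⟪f i, g i⟫_ℂ‖ ≤ ‖f i‖ * ‖g i‖ := norm_inner_le_norm _ _
      _ ≤ (‖f i‖ ^ 2 + ‖g i‖ ^ 2) / 2 := by nlinarith [sq_nonneg (‖f i‖ - ‖g i‖)]
  have hs1 : HasSum (fun i => ⟪x₀, b i⟫_ℂ * ⟪b i, w⟫_ℂ) ⟪x₀, w⟫_ℂ :=
    b.hasSum_inner_mul_inner x₀ w
  have htrace_eq : traceAlong b (γ ∘L A') = ⟪x₀, w⟫_ℂ + ∑' i, ⟪f i, g i⟫_ℂ := by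
    rw [traceAlong, tsum_congr hterm, Summable.tsum_add hs1.summable hfg_summ, hs1.tsum_eq]
  have hx₀w : ⟪x₀, w⟫_ℂ = ⟪γ w, A' w⟫_ℂ := by
    rw [hx₀]
    exact ContinuousLinearMap.adjoint_inner_left A' w (γ w)
  -- bound on R
  have hR : ‖∑' i, ⟪f i, g i⟫_ℂ‖ ≤ Real.sqrt ε := by
    have h1 : ‖∑' i, ⟪f i, g i⟫_ℂ‖ ≤ ∑' i, ‖⟪f i, g i⟫_ℂ‖ :=
      norm_tsum_le_tsum_norm (hfg_summ.norm)
    have h2 : ∑' i, ‖⟪f i, g i⟫_ℂ‖ ≤ ∑' i, ‖f i‖ * ‖g i‖ := by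
      refine Summable.tsum_le_tsum (fun i => norm_inner_le_norm _ _) hfg_summ.norm ?_
      refine Summable.of_nonneg_of_le (fun i => mul_nonneg (norm_nonneg _) (norm_nonneg _))
        (fun i => ?_) ((hkey.summable.add hg2summ).div_const 2)
      nlinarith [sq_nonneg (‖f i‖ - ‖g i‖)]
    have h3 : ∑' i, ‖f i‖ * ‖g i‖
        ≤ Real.sqrt (∑' i, ‖f i‖ ^ 2) * Real.sqrt (∑' i, ‖g i‖ ^ 2) :=
      tsum_mul_le_sqrt _ _ (fun i => norm_nonneg _) (fun i => norm_nonneg _)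
        hkey.summable hg2summ
    have h4 : Real.sqrt (∑' i, ‖f i‖ ^ 2) ≤ Real.sqrt ε := by
      rw [hkey.tsum_eq]
      exact Real.sqrt_le_sqrt hηε
    have h5 : Real.sqrt (∑' i, ‖g i‖ ^ 2) ≤ 1 := Real.sqrt_le_one.mpr hg2le
    calc ‖∑' i, ⟪f i, g i⟫_ℂ‖ ≤ ∑' i, ‖f i‖ * ‖g i‖ := le_trans h1 h2
      _ ≤ Real.sqrt (∑' i, ‖f i‖ ^ 2) * Real.sqrt (∑' i, ‖g i‖ ^ 2) := h3
      _ ≤ Real.sqrt ε * 1 := by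
          refine mul_le_mul h4 h5 (Real.sqrt_nonneg _) (Real.sqrt_nonneg _)
      _ = Real.sqrt ε := mul_one _
  -- second piece
  have hwAw : ⟪w, A' w⟫_ℂ = ⟪u, A u⟫_ℂ := by
    rw [hwdef, hA', ht, inner_self_eq_norm_sq_to_K, hv]
    norm_num
  have hγww : ‖γ w - w‖ ≤ Real.sqrt (2 * ε) := by
    have hγw1 : ‖γ w‖ ≤ 1 := by
      rw [hγS]
      calc ‖S (S w)‖ ≤ ‖S w‖ := hSnorm _
        _ ≤ 1 := hSw1
    have hre : (⟪γ w, w⟫_ℂ).re = 1 - η := by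
      have h0 : ⟪γ w, w⟫_ℂ = (starRingEnd ℂ) ⟪w, γ w⟫_ℂ := (inner_conj_symm _ _).symm
      rw [h0, Complex.conj_re, hwγ, hηdef]
      ring
    have hsq : ‖γ w - w‖ ^ 2 ≤ 2 * ε := by
      have := norm_sub_sq (𝕜 := ℂ) (γ w) w
      have hre' : RCLike.re ⟪γ w, w⟫_ℂ = 1 - η := hre
      rw [hre', hwnorm] at this
      nlinarith [hηε, hγw1, norm_nonneg (γ w)]
    calc ‖γ w - w‖ = Real.sqrt (‖γ w - w‖ ^ 2) := (Real.sqrt_sq (norm_nonneg _)).symm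
      _ ≤ Real.sqrt (2 * ε) := Real.sqrt_le_sqrt hsq
  -- final assembly
  have hA'w : ‖A' w‖ ≤ 1 := by
    calc ‖A' w‖ ≤ ‖w‖ := hA'norm w
      _ = 1 := hwnorm
  have hsecond : ‖⟪γ w, A' w⟫_ℂ - ⟪u, A u⟫_ℂ‖ ≤ Real.sqrt (2 * ε) := by
    rw [← hwAw, ← inner_sub_left]
    calc ‖⟪γ w - w, A' w⟫_ℂ‖ ≤ ‖γ w - w‖ * ‖A' w‖ := norm_inner_le_norm _ _
      _ ≤ Real.sqrt (2 * ε) * 1 := mul_le_mul hγww hA'w (norm_nonneg _) (Real.sqrt_nonneg _)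
      _ = Real.sqrt (2 * ε) := mul_one _
  rw [htrace_eq, hx₀w]
  have : ⟪γ w, A' w⟫_ℂ + (∑' i, ⟪f i, g i⟫_ℂ) - ⟪u, A u⟫_ℂ
      = (⟪γ w, A' w⟫_ℂ - ⟪u, A u⟫_ℂ) + ∑' i, ⟪f i, g i⟫_ℂ := by ring
  rw [this]
  calc ‖(⟪γ w, A' w⟫_ℂ - ⟪u, A u⟫_ℂ) + ∑' i, ⟪f i, g i⟫_ℂ‖
      ≤ ‖⟪γ w, A' w⟫_ℂ - ⟪u, A u⟫_ℂ‖ + ‖∑' i, ⟪f i, g i⟫_ℂ‖ := norm_add_le _ _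
    _ ≤ Real.sqrt (2 * ε) + Real.sqrt ε := add_le_add hsecond hR
    _ ≤ 3 * Real.sqrt ε := by
        have h2 : Real.sqrt (2 * ε) = Real.sqrt 2 * Real.sqrt ε := Real.sqrt_mul (by norm_num) ε
        have h3 : Real.sqrt 2 ≤ 2 := by
          nlinarith [Real.sq_sqrt (by norm_num : (0:ℝ) ≤ 2), Real.sqrt_nonneg 2]
        nlinarith [Real.sqrt_nonneg ε, Real.sqrt_nonneg 2]
end
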